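/- arXiv:2301.03520 — 12 statements merged into one kernel-verified Lean document; each statement's English description precedes it below -/
import Mathlib

section
/- A finite family of vectors {x_i}_{i=1}^m in ℝ^n does phase retrieval if and only if it has the complement property. -/
open scoped RealInnerProductSpace BigOperators

/-- The sign function: `sgn t = 1` if `t > 0` and `-1` otherwise (the paper only uses
it on nonzero reals). -/
noncomputable def sgn (t : ℝ) : ℝ := if 0 < t then 1 else -1

/-- Two vectors in `ℝ^n` weakly have the same phase: there is `θ ∈ {1,-1}` with
`sgn (x i) = θ * sgn (y i)` for every coordinate `i` where both entries are nonzero. -/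
def WeaklySamePhase {n : ℕ} (x y : EuclideanSpace ℝ (Fin n)) : Prop :=
  ∃ θ : ℝ, (θ = 1 ∨ θ = -1) ∧
    ∀ i : Fin n, x i ≠ 0 → y i ≠ 0 → sgn (x i) = θ * sgn (y i)

/-- A family of vectors does weak phase retrieval in `ℝ^n`. -/
def DoesWeakPhaseRetrieval {n : ℕ} {ι : Type*} (x : ι → EuclideanSpace ℝ (Fin n)) : Prop :=
  ∀ u v : EuclideanSpace ℝ (Fin n),
    (∀ i, |(⟪u, x i⟫)| = |(⟪v, x i⟫)|) → WeaklySamePhase u v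

/-- A family of vectors does phase retrieval in `ℝ^n`. -/
def DoesPhaseRetrieval {n : ℕ} {ι : Type*} (x : ι → EuclideanSpace ℝ (Fin n)) : Prop :=
  ∀ u v : EuclideanSpace ℝ (Fin n),
    (∀ i, |(⟪u, x i⟫)| = |(⟪v, x i⟫)|) → u = v ∨ u = -v

lemma mem_orthogonal_span_of_forall {n : ℕ} {S : Set (EuclideanSpace ℝ (Fin n))}
    {w : EuclideanSpace ℝ (Fin n)} (h : ∀ v ∈ S, ⟪v, w⟫ = 0) :
    w ∈ (Submodule.span ℝ S)ᗮ := by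
  rw [Submodule.mem_orthogonal]
  intro u hu
  induction hu using Submodule.span_induction with
  | mem v hv => exact h v hv
  | zero => simp
  | add a b _ _ ha hb => simp [inner_add_left, ha, hb]
  | smul c a _ ha => simp [inner_smul_left, ha]

lemma eq_zero_of_span_top {n : ℕ} {S : Set (EuclideanSpace ℝ (Fin n))}
    {w : EuclideanSpace ℝ (Fin n)} (hS : Submodule.span ℝ S = ⊤)
    (h : ∀ v ∈ S, ⟪v, w⟫ = 0) : w = 0 := by
  have := mem_orthogonal_span_of_forall h
  rw [hS, Submodule.top_orthogonal_eq_bot] at this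
  simpa using this

/-- A finite family of vectors in `ℝ^n` does phase retrieval if and only if it has the
complement property. -/
theorem phaseRetrieval_iff_complementProperty {n m : ℕ}
    (x : Fin m → EuclideanSpace ℝ (Fin n)) :
    DoesPhaseRetrieval x ↔
      ∀ J : Set (Fin m),
        Submodule.span ℝ (x '' J) = ⊤ ∨ Submodule.span ℝ (x '' Jᶜ) = ⊤ := by
  constructor
  · intro hPR J
    by_contra h
    push_neg at h
    obtain ⟨hJ, hJc⟩ := h
    have hu : ∃ u, u ∈ (Submodule.span ℝ (x '' J))ᗮ ∧ u ≠ 0 := by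
      rw [← Submodule.ne_bot_iff]
      intro hb
      exact hJ (Submodule.orthogonal_eq_bot_iff.mp hb)
    have hv : ∃ v, v ∈ (Submodule.span ℝ (x '' Jᶜ))ᗮ ∧ v ≠ 0 := by
      rw [← Submodule.ne_bot_iff]
      intro hb
      exact hJc (Submodule.orthogonal_eq_bot_iff.mp hb)
    obtain ⟨u, hu, hu0⟩ := hu
    obtain ⟨v, hv, hv0⟩ := hv
    have huJ : ∀ i ∈ J, ⟪u, x i⟫ = 0 := fun i hi => by
      rw [real_inner_comm]
      exact hu (x i) (Submodule.subset_span ⟨i, hi, rfl⟩)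
    have hvJc : ∀ i ∉ J, ⟪v, x i⟫ = 0 := fun i hi => by
      rw [real_inner_comm]
      exact hv (x i) (Submodule.subset_span ⟨i, hi, rfl⟩)
    have key : ∀ i, |(⟪u + v, x i⟫)| = |(⟪u - v, x i⟫)| := by
      intro i
      by_cases hi : i ∈ J
      · simp [inner_add_left, inner_sub_left, huJ i hi, abs_neg]
      · simp [inner_add_left, inner_sub_left, hvJc i hi]
    rcases hPR (u + v) (u - v) key with heq | heq
    · apply hv0
      have : (2 : ℝ) • v = 0 := by
        have := sub_eq_zero.mpr heq
        rw [show u + v - (u - v) = (2:ℝ) • v by module] at this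
        exact this
      simpa using this
    · apply hu0
      have : (2 : ℝ) • u = 0 := by
        have : u + v + (u - v) = 0 := by rw [heq]; simp
        rw [show u + v + (u - v) = (2:ℝ) • u by module] at this
        exact this
      simpa using this
  · intro hCP u v h
    set J : Set (Fin m) := {i | ⟪u - v, x i⟫ = 0} with hJdef
    have hJc : ∀ i ∈ Jᶜ, ⟪u + v, x i⟫ = 0 := by
      intro i hi
      have habs := h i
      rcases abs_eq_abs.mp habs with he | he
      · exact absurd (show i ∈ J by
          simp only [hJdef, Set.mem_setOf_eq, inner_sub_left, he, sub_self]) hi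
      · simp [inner_add_left, he]
    rcases hCP J with hs | hs
    · left
      have : u - v = 0 := eq_zero_of_span_top hs ?_
      · exact sub_eq_zero.mp this
      · rintro w ⟨i, hi, rfl⟩
        rw [real_inner_comm]
        exact hi
    · right
      have : u + v = 0 := eq_zero_of_span_top hs ?_
      · exact eq_neg_of_add_eq_zero_left this
      · rintro w ⟨i, hi, rfl⟩
        rw [real_inner_comm]
        exact hJc i hi
end

section
/- If a family of vectors {x_i}_{i=1}^m does phase retrieval in ℝ^n, then m ≥ 2n - 1. -/
open scoped RealInnerProductSpace BigOperators

lemma exists_orth' {n m : ℕ} (x : Fin m → EuclideanSpace ℝ (Fin n))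
    (S : Finset (Fin m)) (hS : S.card < n) :
    ∃ u : EuclideanSpace ℝ (Fin n), u ≠ 0 ∧ ∀ i ∈ S, ⟪u, x i⟫ = 0 := by
  classical
  set K : Submodule ℝ (EuclideanSpace ℝ (Fin n)) :=
    Submodule.span ℝ ((S.image x : Finset _) : Set (EuclideanSpace ℝ (Fin n))) with hK
  have hfin : Module.finrank ℝ K ≤ S.card :=
    le_trans (finrank_span_finset_le_card _) Finset.card_image_le
  have hlt : Module.finrank ℝ K < Module.finrank ℝ (EuclideanSpace ℝ (Fin n)) := by
    simpa [finrank_euclideanSpace, Fintype.card_fin] using lt_of_le_of_lt hfin hS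
  have hsum := Submodule.finrank_add_finrank_orthogonal (K := K)
  have hpos : 0 < Module.finrank ℝ Kᗮ := by omega
  have hbot : Kᗮ ≠ ⊥ := by
    intro hb
    rw [hb] at hpos
    simp at hpos
  obtain ⟨u, hu, hne⟩ := Submodule.exists_mem_ne_zero_of_ne_bot hbot
  refine ⟨u, hne, fun i hi => ?_⟩
  have hx : x i ∈ K := Submodule.subset_span (by
    simp only [Finset.coe_image, Set.mem_image, Finset.mem_coe]
    exact ⟨i, hi, rfl⟩)
  have := (Submodule.mem_orthogonal K u).mp hu (x i) hx
  rw [real_inner_comm]; exact this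


/-- If a family of `m` vectors does phase retrieval in `ℝ^n`, then `m ≥ 2n - 1`. -/
theorem phaseRetrieval_card_ge {n m : ℕ}
    (x : Fin m → EuclideanSpace ℝ (Fin n)) (h : DoesPhaseRetrieval x) :
    2 * n - 1 ≤ m := by
  classical
  by_contra hm
  push_neg at hm
  have hn : 0 < n := by omega
  have hm' : m ≤ 2 * (n - 1) := by omega
  set S : Finset (Fin m) := Finset.univ.filter (fun i : Fin m => (i : ℕ) < n - 1) with hSdef
  have hScard : S.card < n := by
    have : S.card ≤ (Finset.range (n - 1)).card := by
      refine Finset.card_le_card_of_injOn (fun i => (i : ℕ)) ?_ ?_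
      · intro i hi
        simp only [hSdef, Finset.mem_coe, Finset.mem_filter] at hi
        simpa using hi.2
      · intro a _ b _ hab
        exact Fin.ext hab
    simp only [Finset.card_range] at this
    omega
  have hSccard : Sᶜ.card < n := by
    have : Sᶜ.card ≤ (Finset.range (n - 1)).card := by
      refine Finset.card_le_card_of_injOn (fun i => (i : ℕ) - (n - 1)) ?_ ?_
      · intro i hi
        simp only [hSdef, Finset.mem_coe, Finset.mem_compl, Finset.mem_filter, Finset.mem_univ,
          true_and, not_lt] at hi
        have := i.isLt
        simp only [Finset.mem_coe, Finset.mem_range]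
        omega
      · intro a ha b hb hab
        have ha' : ¬((a : ℕ) < n - 1) := by
          have := Finset.mem_compl.mp ha
          simpa [hSdef] using this
        have hb' : ¬((b : ℕ) < n - 1) := by
          have := Finset.mem_compl.mp hb
          simpa [hSdef] using this
        have hab' : (a : ℕ) - (n - 1) = (b : ℕ) - (n - 1) := hab
        exact Fin.ext (by omega)
    simp only [Finset.card_range] at this
    omega
  obtain ⟨u, hu0, hu⟩ := exists_orth' x S hScard
  obtain ⟨v, hv0, hv⟩ := exists_orth' x Sᶜ hSccard
  have key : ∀ i, |⟪u + v, x i⟫| = |⟪u - v, x i⟫| := by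
    intro i
    by_cases hi : i ∈ S
    · have h1 := hu i hi
      rw [inner_add_left, inner_sub_left, h1]
      simp [abs_neg]
    · have h2 := hv i (Finset.mem_compl.mpr hi)
      rw [inner_add_left, inner_sub_left, h2]
      simp
  rcases h _ _ key with he | he
  · apply hv0
    have h2 : v + v = 0 := by
      have := sub_eq_zero_of_eq he
      have h3 : (u + v) - (u - v) = v + v := by abel
      rwa [h3] at this
    have : (2 : ℝ) • v = 0 := by rw [two_smul]; exact h2
    have := smul_eq_zero.mp this
    rcases this with h4 | h4
    · norm_num at h4
    · exact h4
  · apply hu0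
    have h2 : u + u = 0 := by
      have := sub_eq_zero_of_eq he
      have h3 : (u + v) - -(u - v) = u + u := by abel
      rwa [h3] at this
    have : (2 : ℝ) • u = 0 := by rw [two_smul]; exact h2
    have := smul_eq_zero.mp this
    rcases this with h4 | h4
    · norm_num at h4
    · exact h4
end

section
/- A family of vectors {x_i}_{i=1}^{2n-1} in ℝ^n does phase retrieval if and only if it is full spark. -/
open scoped RealInnerProductSpace BigOperators

/-- If a submodule of Euclidean space is not everything, there is a nonzero vector
orthogonal to it. -/
lemma exists_orth_of_ne_top {n : ℕ} {K : Submodule ℝ (EuclideanSpace ℝ (Fin n))}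
    (hK : K ≠ ⊤) : ∃ w : EuclideanSpace ℝ (Fin n), w ≠ 0 ∧ ∀ u ∈ K, ⟪w, u⟫ = 0 := by
  have hbot : Kᗮ ≠ ⊥ := by
    intro h
    exact hK (Submodule.orthogonal_eq_bot_iff.mp h)
  obtain ⟨w, hwK, hw0⟩ := Submodule.exists_mem_ne_zero_of_ne_bot hbot
  exact ⟨w, hw0, fun u hu => Submodule.inner_left_of_mem_orthogonal hu hwK⟩

/-- If `w` is orthogonal to `n` linearly independent vectors in `ℝ^n`, then `w = 0`. -/
lemma eq_zero_of_orth_li {n m : ℕ} (x : Fin m → EuclideanSpace ℝ (Fin n))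
    (I : Finset (Fin m)) (hcard : I.card = n)
    (hli : LinearIndependent ℝ (fun i : I => x i))
    (w : EuclideanSpace ℝ (Fin n)) (hw : ∀ i ∈ I, ⟪w, x i⟫ = 0) : w = 0 := by
  have hspan : Submodule.span ℝ (Set.range fun i : I => x i) = ⊤ :=
    hli.span_eq_top_of_card_eq_finrank' (by
      rw [Fintype.card_coe, hcard, finrank_euclideanSpace_fin])
  have hall : ∀ u ∈ Submodule.span ℝ (Set.range fun i : I => x i), ⟪w, u⟫ = 0 := by
    intro u hu
    induction hu using Submodule.span_induction with
    | mem u hu =>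
      obtain ⟨i, rfl⟩ := hu
      exact hw i i.2
    | zero => exact inner_zero_right w
    | add u v _ _ hu hv => rw [inner_add_right, hu, hv, add_zero]
    | smul c u _ hu => rw [real_inner_smul_right, hu, mul_zero]
  have := hall w (hspan ▸ Submodule.mem_top)
  exact inner_self_eq_zero.mp this

/-- A family of `2n - 1` vectors in `ℝ^n` does phase retrieval if and only if it is
full spark. -/
theorem phaseRetrieval_iff_fullSpark {n : ℕ}
    (x : Fin (2 * n - 1) → EuclideanSpace ℝ (Fin n)) :
    DoesPhaseRetrieval x ↔
      ∀ I : Finset (Fin (2 * n - 1)), I.card = n →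
        LinearIndependent ℝ (fun i : I => x i) := by
  classical
  rcases Nat.eq_zero_or_pos n with hn | hn
  · subst hn
    constructor
    · intro _ I hI
      have : I = ∅ := Finset.card_eq_zero.mp hI
      subst this
      exact linearIndependent_empty_type
    · intro _ u v _
      left
      exact Subsingleton.elim u v
  constructor
  · -- phase retrieval → full spark
    intro hpr I hI
    by_contra hdep
    -- the vectors indexed by I do not span
    have hspan : Submodule.span ℝ (x '' I) ≠ ⊤ := by
      intro htop
      apply hdep
      apply linearIndependent_of_top_le_span_of_card_eq_finrank
      · rw [show Set.range (fun i : I => x i) = x '' I by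
          ext y; simp [Set.mem_image]]
        exact htop.ge
      · rw [Fintype.card_coe, hI, finrank_euclideanSpace_fin]
    obtain ⟨u, hu0, hu⟩ := exists_orth_of_ne_top hspan
    -- the complement has n - 1 < n vectors, so they don't span either
    have hccard : (Iᶜ : Finset (Fin (2 * n - 1))).card = n - 1 := by
      rw [Finset.card_compl, hI, Fintype.card_fin]
      omega
    have hspan' : Submodule.span ℝ ((Iᶜ.image x : Finset (EuclideanSpace ℝ (Fin n))) :
        Set (EuclideanSpace ℝ (Fin n))) ≠ ⊤ := by
      intro htop
      have h1 := finrank_span_finset_le_card (R := ℝ) (Iᶜ.image x)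
      rw [Set.finrank, htop, finrank_top, finrank_euclideanSpace_fin] at h1
      have h2 := Finset.card_image_le (s := Iᶜ) (f := x)
      omega
    obtain ⟨v, hv0, hv⟩ := exists_orth_of_ne_top hspan'
    have key : ∀ i, |⟪u + v, x i⟫| = |⟪u - v, x i⟫| := by
      intro i
      by_cases hi : i ∈ I
      · have h0 : ⟪u, x i⟫ = 0 := hu _ (Submodule.subset_span ⟨i, hi, rfl⟩)
        rw [inner_add_left, inner_sub_left, h0, zero_add, zero_sub, abs_neg]
      · have h0 : ⟪v, x i⟫ = 0 := hv _ (Submodule.subset_span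
          (Finset.mem_image_of_mem x (Finset.mem_compl.mpr hi)))
        rw [inner_add_left, inner_sub_left, h0, add_zero, sub_zero]
    rcases hpr (u + v) (u - v) key with h | h
    · apply hv0
      have hv' : v = (2⁻¹ : ℝ) • ((u + v) - (u - v)) := by module
      rw [h, sub_self, smul_zero] at hv'
      exact hv'
    · apply hu0
      have hu' : u = (2⁻¹ : ℝ) • ((u + v) + (u - v)) := by module
      rw [h, neg_add_cancel, smul_zero] at hu'
      exact hu'
  · -- full spark → phase retrieval
    intro hfs u v habs
    set A := Finset.univ.filter (fun i => ⟪u - v, x i⟫ = 0) with hA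
    set B := Finset.univ.filter (fun i => ⟪u + v, x i⟫ = 0) with hB
    have hunion : A ∪ B = Finset.univ := by
      apply Finset.eq_univ_of_forall
      intro i
      rcases abs_eq_abs.mp (habs i) with h | h
      · exact Finset.mem_union_left _ (Finset.mem_filter.mpr
          ⟨Finset.mem_univ i, by rw [inner_sub_left, h, sub_self]⟩)
      · exact Finset.mem_union_right _ (Finset.mem_filter.mpr
          ⟨Finset.mem_univ i, by rw [inner_add_left, h, neg_add_cancel]⟩)
    have hcards : 2 * n - 1 ≤ A.card + B.card := by
      calc 2 * n - 1 = (Finset.univ : Finset (Fin (2 * n - 1))).card := by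
            simp
        _ = (A ∪ B).card := by rw [hunion]
        _ ≤ A.card + B.card := Finset.card_union_le A B
    have hor : n ≤ A.card ∨ n ≤ B.card := by omega
    rcases hor with h | h
    · left
      obtain ⟨I, hIsub, hIcard⟩ := Finset.exists_subset_card_eq h
      have : u - v = 0 := eq_zero_of_orth_li x I hIcard (hfs I hIcard) (u - v)
        (fun i hi => by
          have := hIsub hi
          simp only [hA, Finset.mem_filter] at this
          exact this.2)
      exact sub_eq_zero.mp this
    · right
      obtain ⟨I, hIsub, hIcard⟩ := Finset.exists_subset_card_eq h
      have : u + v = 0 := eq_zero_of_orth_li x I hIcard (hfs I hIcard) (u + v)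
        (fun i hi => by
          have := hIsub hi
          simp only [hB, Finset.mem_filter] at this
          exact this.2)
      exact eq_neg_of_add_eq_zero_left this
end

section
/- Suppose {x_i}_{i=1}^m does weak phase retrieval in ℝ^n. Then for every subset I ⊆ {1,…,m}, if x, y ∈ ℝ^n satisfy ‖x‖ = ‖y‖ = 1, x ⊥ x_i for all i ∈ I, and y ⊥ x_i for all i ∈ I^c, then x + y and x - y are disjointly supported, i.e., for every coordinate j ∈ {1,…,n}, either (x+y)(j) = 0 or (x-y)(j) = 0. -/
open scoped RealInnerProductSpace BigOperators

/-- If `{x i}` does weak phase retrieval in `ℝ^n`, `I` is a subset of indices, and `u, v`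
are unit vectors with `u ⊥ x i` for `i ∈ I` and `v ⊥ x i` for `i ∉ I`, then `u + v` and
`u - v` are disjointly supported. -/
theorem weakPhaseRetrieval_disjoint_support {n m : ℕ}
    (x : Fin m → EuclideanSpace ℝ (Fin n)) (h : DoesWeakPhaseRetrieval x)
    (I : Set (Fin m)) (u v : EuclideanSpace ℝ (Fin n))
    (hu : ‖u‖ = 1) (hv : ‖v‖ = 1)
    (huI : ∀ i ∈ I, ⟪u, x i⟫ = 0) (hvI : ∀ i ∉ I, ⟪v, x i⟫ = 0) :
    ∀ j : Fin n, (u + v) j = 0 ∨ (u - v) j = 0 := by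
  set a := u + v with ha
  set b := u - v with hb
  -- measurements of a and b agree in absolute value
  have hmeas : ∀ i, |(⟪a, x i⟫)| = |(⟪b, x i⟫)| := by
    intro i
    by_cases hi : i ∈ I
    · have h0 : ⟪u, x i⟫ = 0 := huI i hi
      rw [ha, hb, inner_add_left, inner_sub_left, h0]
      simp [abs_neg]
    · have h0 : ⟪v, x i⟫ = 0 := hvI i hi
      rw [ha, hb, inner_add_left, inner_sub_left, h0]
      simp
  obtain ⟨θ, hθ, hphase⟩ := h a b hmeas
  have hθ0 : θ ≠ 0 := by rcases hθ with h1 | h1 <;> simp [h1]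
  -- inner product of a and b is zero
  have hab : ⟪a, b⟫ = 0 := by
    rw [ha, hb, inner_sub_right, inner_add_left, inner_add_left]
    have h1 : ⟪u, u⟫ = (1 : ℝ) := by rw [real_inner_self_eq_norm_sq, hu]; norm_num
    have h2 : ⟪v, v⟫ = (1 : ℝ) := by rw [real_inner_self_eq_norm_sq, hv]; norm_num
    have h3 : ⟪u, v⟫ = ⟪v, u⟫ := (real_inner_comm v u)
    linarith
  -- each term θ * (a j * b j) is nonneg
  have hterm : ∀ j : Fin n, 0 ≤ θ * (a j * b j) := by
    intro j
    rcases eq_or_ne (a j) 0 with haj | haj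
    · simp [haj]
    rcases eq_or_ne (b j) 0 with hbj | hbj
    · simp [hbj]
    have hs := hphase j haj hbj
    unfold sgn at hs
    rcases hθ with h1 | h1 <;> subst h1 <;> split_ifs at hs with hA hB hB <;>
      norm_num at hs <;>
      rcases lt_or_gt_of_ne haj with h1 | h1 <;>
      rcases lt_or_gt_of_ne hbj with h2 | h2 <;>
      first
        | linarith
        | nlinarith [mul_pos h1 h2]
        | nlinarith [mul_pos_of_neg_of_neg h1 h2]
        | nlinarith [mul_neg_of_pos_of_neg h1 h2]
        | nlinarith [mul_neg_of_neg_of_pos h1 h2]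
  have hinner : ⟪a, b⟫ = ∑ j : Fin n, a j * b j := by
    simp [PiLp.inner_apply, RCLike.inner_apply, mul_comm]
  have hsum : ∑ j : Fin n, θ * (a j * b j) = 0 := by
    rw [← Finset.mul_sum, ← hinner, hab, mul_zero]
  intro j
  have hz : θ * (a j * b j) = 0 :=
    (Finset.sum_eq_zero_iff_of_nonneg (fun j _ => hterm j)).mp hsum j (Finset.mem_univ j)
  rcases mul_eq_zero.mp hz with h0 | h0
  · exact absurd h0 hθ0
  · exact mul_eq_zero.mp h0
end

section
/- Let x = (a_1,…,a_n) and y = (b_1,…,b_n) be vectors in ℝ^n. The following are equivalent: (1) for all i ≠ j in {1,…,n} with a_i·a_j ≠ 0 and b_i·b_j ≠ 0, sgn(a_i·a_j) = sgn(b_i·b_j); (2) x and y weakly have the same phase. -/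
open scoped RealInnerProductSpace BigOperators

lemma sgn_mul_of_ne (a b : ℝ) (ha : a ≠ 0) (hb : b ≠ 0) : sgn (a * b) = sgn a * sgn b := by
  unfold sgn
  rcases ha.lt_or_gt with ha' | ha' <;> rcases hb.lt_or_gt with hb' | hb'
  · rw [if_pos (mul_pos_of_neg_of_neg ha' hb'), if_neg ha'.not_gt, if_neg hb'.not_gt]; ring
  · rw [if_neg (mul_neg_of_neg_of_pos ha' hb').not_gt, if_neg ha'.not_gt, if_pos hb']; ring
  · rw [if_neg (mul_neg_of_pos_of_neg ha' hb').not_gt, if_pos ha', if_neg hb'.not_gt]; ring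
  · rw [if_pos (mul_pos ha' hb'), if_pos ha', if_pos hb']; ring

lemma sgn_sq (a : ℝ) : sgn a * sgn a = 1 := by
  unfold sgn; split <;> ring

/-- For `x, y ∈ ℝ^n`: the sign products `sgn (x i * x j)` and `sgn (y i * y j)` agree for
all `i ≠ j` (where both products are nonzero) if and only if `x` and `y` weakly have the
same phase. -/
theorem sign_products_iff_weaklySamePhase {n : ℕ} (x y : EuclideanSpace ℝ (Fin n)) :
    (∀ i j : Fin n, i ≠ j → x i * x j ≠ 0 → y i * y j ≠ 0 →
        sgn (x i * x j) = sgn (y i * y j)) ↔ WeaklySamePhase x y := by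
  constructor
  · intro h
    by_cases hex : ∃ i : Fin n, x i ≠ 0 ∧ y i ≠ 0
    · obtain ⟨i0, hx0, hy0⟩ := hex
      refine ⟨sgn (x i0) * sgn (y i0), ?_, ?_⟩
      · unfold sgn; split <;> split <;> simp
      · intro i hxi hyi
        by_cases hi : i = i0
        · subst hi
          linear_combination -sgn (x i) * sgn_sq (y i)
        · have hh := h i i0 hi (mul_ne_zero hxi hx0) (mul_ne_zero hyi hy0)
          rw [sgn_mul_of_ne _ _ hxi hx0, sgn_mul_of_ne _ _ hyi hy0] at hh
          linear_combination sgn (x i0) * hh - sgn (x i) * sgn_sq (x i0)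
    · exact ⟨1, Or.inl rfl, fun i hxi hyi => absurd ⟨i, hxi, hyi⟩ hex⟩
  · rintro ⟨θ, hθ, hsame⟩ i j hij hx hy
    have hxi := left_ne_zero_of_mul hx
    have hxj := right_ne_zero_of_mul hx
    have hyi := left_ne_zero_of_mul hy
    have hyj := right_ne_zero_of_mul hy
    rw [sgn_mul_of_ne _ _ hxi hxj, sgn_mul_of_ne _ _ hyi hyj,
      hsame i hxi hyi, hsame j hxj hyj]
    have hθ2 : θ * θ = 1 := by rcases hθ with h | h <;> simp [h]
    linear_combination sgn (y i) * sgn (y j) * hθ2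
end

section
/- If a spanning family {x_i}_{i=1}^m for ℝ^n does weak phase retrieval in ℝ^n, then m ≥ 2n - 2. -/
open scoped RealInnerProductSpace BigOperators

set_option maxHeartbeats 1000000 in
/-- If a spanning family of `m` vectors does weak phase retrieval in `ℝ^n`,
then `m ≥ 2n - 2`. -/
theorem weakPhaseRetrieval_card_ge {n m : ℕ}
    (x : Fin m → EuclideanSpace ℝ (Fin n))
    (hspan : Submodule.span ℝ (Set.range x) = ⊤)
    (h : DoesWeakPhaseRetrieval x) :
    2 * n - 2 ≤ m := by
  classical
  by_contra hm
  push_neg at hm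
  have hn : 2 ≤ n := by omega
  have hm' : m ≤ 2 * n - 3 := by omega
  -- split the index set
  set s₁ : Finset (Fin m) := Finset.univ.filter (fun i => (i : ℕ) < n - 2) with hs₁
  set s₂ : Finset (Fin m) := Finset.univ.filter (fun i => ¬ (i : ℕ) < n - 2) with hs₂
  set S₁ : Submodule ℝ (EuclideanSpace ℝ (Fin n)) := Submodule.span ℝ ((s₁.image x : Finset (EuclideanSpace ℝ (Fin n))) : Set (EuclideanSpace ℝ (Fin n))) with hS₁
  set S₂ : Submodule ℝ (EuclideanSpace ℝ (Fin n)) := Submodule.span ℝ ((s₂.image x : Finset (EuclideanSpace ℝ (Fin n))) : Set (EuclideanSpace ℝ (Fin n))) with hS₂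
  have hcard₁ : s₁.card ≤ n - 2 := by
    have h1 : s₁.card ≤ (Finset.range (n - 2)).card := by
      refine Finset.card_le_card_of_injOn (fun i => (i : ℕ)) ?_ ?_
      · intro i hi
        simp only [hs₁, Finset.mem_filter, Finset.mem_univ, true_and] at hi
        simpa using hi
      · intro a _ b _ hab
        exact Fin.val_injective hab
    simpa using h1
  have hcard₂ : s₂.card ≤ n - 1 := by
    have h1 : s₂.card ≤ (Finset.Ico (n - 2) m).card := by
      refine Finset.card_le_card_of_injOn (fun i => (i : ℕ)) ?_ ?_
      · intro i hi
        simp only [hs₂, Finset.mem_coe, Finset.mem_filter, Finset.mem_univ, true_and, not_lt] at hi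
        simp only [Finset.mem_coe, Finset.coe_Ico, Set.mem_Ico, Finset.mem_Ico]
        exact ⟨hi, i.isLt⟩
      · intro a _ b _ hab
        exact Fin.val_injective hab
    rw [Nat.card_Ico] at h1
    omega
  have hEfin : Module.finrank ℝ (EuclideanSpace ℝ (Fin n)) = n := finrank_euclideanSpace_fin
  have hr₁ : Module.finrank ℝ S₁ ≤ n - 2 :=
    le_trans (finrank_span_finset_le_card (s₁.image x))
      (le_trans Finset.card_image_le hcard₁)
  have hr₂ : Module.finrank ℝ S₂ ≤ n - 1 :=
    le_trans (finrank_span_finset_le_card (s₂.image x))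
      (le_trans Finset.card_image_le hcard₂)
  have horth₁ : 2 ≤ Module.finrank ℝ S₁ᗮ := by
    have := S₁.finrank_add_finrank_orthogonal
    omega
  have horth₂ : 0 < Module.finrank ℝ S₂ᗮ := by
    have := S₂.finrank_add_finrank_orthogonal
    omega
  -- pick v ∈ S₂ᗮ, v ≠ 0
  obtain ⟨v0, hv0⟩ := (Module.finrank_pos_iff_exists_ne_zero (R := ℝ) (M := S₂ᗮ)).mp horth₂
  set v : EuclideanSpace ℝ (Fin n) := (v0 : EuclideanSpace ℝ (Fin n)) with hv
  have hvS : v ∈ S₂ᗮ := v0.2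
  have hvne : v ≠ 0 := by
    simpa [hv, Submodule.coe_eq_zero] using hv0
  obtain ⟨k0, hk0⟩ : ∃ k : Fin n, v k ≠ 0 := by
    by_contra hc
    push_neg at hc
    exact hvne (by ext k; simpa using hc k)
  -- pick w ∈ S₁ᗮ, w ≠ 0, w k0 = 0
  set f : S₁ᗮ →ₗ[ℝ] ℝ :=
    { toFun := fun u => (u : EuclideanSpace ℝ (Fin n)) k0
      map_add' := by intro a b; simp
      map_smul' := by intro c a; simp } with hf
  have hker : 0 < Module.finrank ℝ (LinearMap.ker f) := by
    have h1 := LinearMap.finrank_range_add_finrank_ker f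
    have h2 : Module.finrank ℝ (LinearMap.range f) ≤ 1 :=
      le_trans (Submodule.finrank_le _) (le_of_eq (Module.finrank_self ℝ))
    omega
  obtain ⟨w0, hw0⟩ :=
    (Module.finrank_pos_iff_exists_ne_zero (R := ℝ) (M := LinearMap.ker f)).mp hker
  set w : EuclideanSpace ℝ (Fin n) := ((w0 : S₁ᗮ) : EuclideanSpace ℝ (Fin n)) with hw
  have hwS : w ∈ S₁ᗮ := (w0 : S₁ᗮ).2
  have hwne : w ≠ 0 := by
    intro hc
    apply hw0
    have : (w0 : S₁ᗮ) = 0 := by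
      exact Subtype.ext (by simpa [hw] using hc)
    exact Subtype.ext this
  have hwk0 : w k0 = 0 := by
    have := w0.2
    rw [LinearMap.mem_ker] at this
    exact this
  obtain ⟨l, hl⟩ : ∃ l : Fin n, w l ≠ 0 := by
    by_contra hc
    push_neg at hc
    exact hwne (by ext k; simpa using hc k)
  have hlk0 : l ≠ k0 := by
    intro hc; rw [hc, hwk0] at hl; exact hl rfl
  -- the two test vectors
  set t : ℝ := (|v l| + 1) / |w l| with ht
  have hwl : (0:ℝ) < |w l| := abs_pos.mpr hl
  have htA : t * |w l| = |v l| + 1 := div_mul_cancel₀ _ (ne_of_gt hwl)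
  have htpos : 0 < t := div_pos (by positivity) hwl
  set X : EuclideanSpace ℝ (Fin n) := t • w + v with hX
  set Y : EuclideanSpace ℝ (Fin n) := t • w - v with hY
  -- equal measurements
  have hmeas : ∀ i, |(⟪X, x i⟫)| = |(⟪Y, x i⟫)| := by
    intro i
    by_cases hi : (i : ℕ) < n - 2
    · have hxi : x i ∈ S₁ := by
        apply Submodule.subset_span
        simp only [Finset.coe_image, Set.mem_image, Finset.mem_coe, hs₁, Finset.mem_filter,
          Finset.mem_univ, true_and]
        exact ⟨i, hi, rfl⟩
      have hw0' : ⟪w, x i⟫ = 0 := by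
        rw [real_inner_comm]
        exact (Submodule.mem_orthogonal S₁ w).mp hwS _ hxi
      have e1 : ⟪X, x i⟫ = ⟪v, x i⟫ := by
        rw [hX, inner_add_left, real_inner_smul_left, hw0']; ring
      have e2 : ⟪Y, x i⟫ = -⟪v, x i⟫ := by
        rw [hY, inner_sub_left, real_inner_smul_left, hw0']; ring
      rw [e1, e2, abs_neg]
    · have hxi : x i ∈ S₂ := by
        apply Submodule.subset_span
        simp only [Finset.coe_image, Set.mem_image, Finset.mem_coe, hs₂, Finset.mem_filter,
          Finset.mem_univ, true_and]
        exact ⟨i, hi, rfl⟩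
      have hv0' : ⟪v, x i⟫ = 0 := by
        rw [real_inner_comm]
        exact (Submodule.mem_orthogonal S₂ v).mp hvS _ hxi
      have e1 : ⟪X, x i⟫ = t * ⟪w, x i⟫ := by
        rw [hX, inner_add_left, real_inner_smul_left, hv0']; ring
      have e2 : ⟪Y, x i⟫ = t * ⟪w, x i⟫ := by
        rw [hY, inner_sub_left, real_inner_smul_left, hv0']; ring
      rw [e1, e2]
  obtain ⟨θ, hθ, hph⟩ := h X Y hmeas
  -- coordinates
  have hXk0 : X k0 = v k0 := by
    simp [hX, PiLp.add_apply, PiLp.smul_apply, smul_eq_mul, hwk0]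
  have hYk0 : Y k0 = -v k0 := by
    simp [hY, PiLp.sub_apply, PiLp.smul_apply, smul_eq_mul, hwk0]
  have hXl : X l = t * w l + v l := by
    simp [hX, PiLp.add_apply, PiLp.smul_apply, smul_eq_mul]
  have hYl : Y l = t * w l - v l := by
    simp [hY, PiLp.sub_apply, PiLp.smul_apply, smul_eq_mul]
  have hvl1 : -|v l| ≤ v l := neg_abs_le _
  have hvl2 : v l ≤ |v l| := le_abs_self _
  -- at coordinate l, X and Y have the same (nonzero) sign
  have hsame : (X l ≠ 0 ∧ Y l ≠ 0 ∧ sgn (X l) = sgn (Y l)) := by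
    rcases lt_or_gt_of_ne hl with hneg | hpos
    · have hA : t * w l = -(|v l| + 1) := by
        rw [abs_of_neg hneg] at htA; linarith
      have h1 : X l < 0 := by rw [hXl, hA]; linarith
      have h2 : Y l < 0 := by rw [hYl, hA]; linarith
      exact ⟨ne_of_lt h1, ne_of_lt h2, by
        simp [sgn, if_neg (not_lt.mpr (le_of_lt h1)), if_neg (not_lt.mpr (le_of_lt h2))]⟩
    · have hA : t * w l = |v l| + 1 := by
        rw [abs_of_pos hpos] at htA; linarith
      have h1 : 0 < X l := by rw [hXl, hA]; linarith
      have h2 : 0 < Y l := by rw [hYl, hA]; linarith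
      exact ⟨ne_of_gt h1, ne_of_gt h2, by simp [sgn, if_pos h1, if_pos h2]⟩
  obtain ⟨hXl0, hYl0, hsgn⟩ := hsame
  have hsgnY : sgn (Y l) = 1 ∨ sgn (Y l) = -1 := by
    by_cases hc : 0 < Y l <;> simp [sgn, hc]
  -- θ = 1
  have hθ1 : θ = 1 := by
    have := hph l hXl0 hYl0
    rw [hsgn] at this
    rcases hsgnY with h1 | h1 <;> rw [h1] at this <;> linarith [mul_one θ, mul_neg_one θ]
  -- contradiction at k0
  have hXk00 : X k0 ≠ 0 := by rw [hXk0]; exact hk0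
  have hYk00 : Y k0 ≠ 0 := by rw [hYk0]; exact neg_ne_zero.mpr hk0
  have hcontr := hph k0 hXk00 hYk00
  rw [hθ1, one_mul, hXk0, hYk0] at hcontr
  rcases lt_or_gt_of_ne hk0 with hneg | hpos
  · rw [sgn, sgn, if_neg (not_lt.mpr (le_of_lt hneg)), if_pos (by linarith)] at hcontr
    linarith
  · rw [sgn, sgn, if_pos hpos, if_neg (by simp; linarith)] at hcontr
    linarith
end

section
/- If a spanning family {x_i}_{i=1}^{2n-2} for ℝ^n does weak phase retrieval in ℝ^n, then it is full spark. -/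
open scoped RealInnerProductSpace BigOperators

lemma sgn_ne_zero (t : ℝ) : sgn t ≠ 0 := by
  unfold sgn; split <;> norm_num

lemma sgn_of_mul_neg {p q : ℝ} (h : p * q < 0) : sgn p = - sgn q := by
  unfold sgn
  rcases lt_trichotomy 0 p with hp | hp | hp
  · have hq : ¬ (0 < q) := by intro hq; nlinarith
    simp [hp, hq]
  · exfalso; rw [← hp] at h; simp at h
  · have hq : 0 < q := by nlinarith
    simp [hq, not_lt.mpr hp.le]

set_option maxHeartbeats 1000000 in
/-- If a spanning family of `2n - 2` vectors does weak phase retrieval in `ℝ^n`, then it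
is full spark. -/
theorem weakPhaseRetrieval_fullSpark {n : ℕ}
    (x : Fin (2 * n - 2) → EuclideanSpace ℝ (Fin n))
    (hspan : Submodule.span ℝ (Set.range x) = ⊤)
    (h : DoesWeakPhaseRetrieval x) :
    ∀ I : Finset (Fin (2 * n - 2)), I.card = n →
      LinearIndependent ℝ (fun i : I => x i) := by
  classical
  intro I hI
  rcases Nat.lt_or_ge n 2 with hn | hn
  · interval_cases n
    · have hIe : I = ∅ := Finset.card_eq_zero.mp hI
      subst hIe
      exact linearIndependent_empty_type
    · exfalso
      have h0 : I.card ≤ Fintype.card (Fin (2 * 1 - 2)) := I.card_le_univ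
      simp [hI] at h0
  · by_contra hLI
    have hfr : Module.finrank ℝ (EuclideanSpace ℝ (Fin n)) = n := finrank_euclideanSpace_fin
    -- the vectors indexed by I do not span
    set S := Submodule.span ℝ (Set.range fun i : I => x i) with hS
    have hStop : S ≠ ⊤ := by
      intro htop
      exact hLI (linearIndependent_of_top_le_span_of_card_eq_finrank htop.ge
        (by simp [Fintype.card_coe, hI, hfr]))
    -- pick u ≠ 0 orthogonal to all x i, i ∈ I
    have hSbot : Sᗮ ≠ ⊥ := fun hb => hStop (Submodule.orthogonal_eq_bot_iff.mp hb)
    obtain ⟨u, huS, hune⟩ := Submodule.ne_bot_iff _ |>.mp hSbot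
    have hu0 : ∀ i ∈ I, ⟪u, x i⟫ = 0 := by
      intro i hi
      have hx : x i ∈ S := Submodule.subset_span ⟨⟨i, hi⟩, rfl⟩
      have := (Submodule.mem_orthogonal S u).mp huS (x i) hx
      rwa [real_inner_comm] at this
    -- the span of the complementary vectors has dimension ≤ n - 2
    set T := Submodule.span ℝ ((↑(Finset.image x Iᶜ) : Set (EuclideanSpace ℝ (Fin n)))) with hT
    have hTcard : Module.finrank ℝ T ≤ n - 2 := by
      refine le_trans (finrank_span_finset_le_card _) ?_
      refine le_trans (Finset.card_image_le) ?_
      have : Iᶜ.card = Fintype.card (Fin (2 * n - 2)) - I.card := Finset.card_compl I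
      simp only [Fintype.card_fin] at this
      omega
    have hW2 : 2 ≤ Module.finrank ℝ Tᗮ := by
      have := Submodule.finrank_add_finrank_orthogonal T
      rw [hfr] at this
      omega
    -- pick a coordinate where u is nonzero
    have hk : ∃ k, u k ≠ 0 := by
      by_contra h'
      push_neg at h'
      exact hune (PiLp.ext fun i => by simp [h'])
    obtain ⟨k, huk⟩ := hk
    -- pick v ≠ 0 in Tᗮ with v k = 0
    set f := (EuclideanSpace.projₗ k : EuclideanSpace ℝ (Fin n) →ₗ[ℝ] ℝ) with hf
    have hker : n - 1 ≤ Module.finrank ℝ (LinearMap.ker f) := by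
      have h1 := LinearMap.finrank_range_add_finrank_ker f
      have h2 : Module.finrank ℝ (LinearMap.range f) ≤ 1 := by
        refine le_trans (Submodule.finrank_le _) ?_
        simp
      rw [hfr] at h1
      omega
    have hW' : Tᗮ ⊓ LinearMap.ker f ≠ ⊥ := by
      intro hb
      have hsup : Module.finrank ℝ ↥(Tᗮ ⊔ LinearMap.ker f) ≤ n := by
        have h3 := Submodule.finrank_le (Tᗮ ⊔ LinearMap.ker f)
        rwa [hfr] at h3
      have heq := Submodule.finrank_sup_add_finrank_inf_eq Tᗮ (LinearMap.ker f)
      rw [hb] at heq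
      simp only [finrank_bot, add_zero] at heq
      omega
    obtain ⟨v, hvm, hvne⟩ := Submodule.ne_bot_iff _ |>.mp hW'
    have hvT : v ∈ Tᗮ := hvm.1
    have hvk : v k = 0 := hvm.2
    have hv0 : ∀ i ∉ I, ⟪v, x i⟫ = 0 := by
      intro i hi
      have hx : x i ∈ T := Submodule.subset_span (Finset.mem_coe.mpr
        (Finset.mem_image.mpr ⟨i, Finset.mem_compl.mpr hi, rfl⟩))
      have := (Submodule.mem_orthogonal T v).mp hvT (x i) hx
      rwa [real_inner_comm] at this
    -- pick a coordinate where v is nonzero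
    have hl : ∃ l, v l ≠ 0 := by
      by_contra h'
      push_neg at h'
      exact hvne (PiLp.ext fun i => by simp [h'])
    obtain ⟨l, hvl⟩ := hl
    -- scale v so that |t * v l| > |u l|
    set t : ℝ := (|u l| + 1) / |v l| with ht
    have hvl' : 0 < |v l| := abs_pos.mpr hvl
    have htvl : |u l| < |t * v l| := by
      rw [abs_mul, ht, abs_div, abs_abs, abs_of_nonneg (by positivity : (0:ℝ) ≤ |u l| + 1),
        div_mul_cancel₀ _ (ne_of_gt hvl')]
      linarith
    set a : EuclideanSpace ℝ (Fin n) := u + t • v with ha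
    set b : EuclideanSpace ℝ (Fin n) := u - t • v with hb
    have hmeas : ∀ i, |(⟪a, x i⟫)| = |(⟪b, x i⟫)| := by
      intro i
      rw [ha, hb, inner_add_left, inner_sub_left, real_inner_smul_left]
      by_cases hi : i ∈ I
      · rw [hu0 i hi]
        simp [abs_neg]
      · rw [hv0 i hi]
        simp
    obtain ⟨θ, hθ, hph⟩ := h a b hmeas
    have hak : a k = u k := by
      simp [ha, PiLp.add_apply, PiLp.smul_apply, hvk]
    have hbk : b k = u k := by
      simp [hb, PiLp.sub_apply, PiLp.smul_apply, hvk]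
    have hθ1 : θ = 1 := by
      rcases hθ with h' | h'
      · exact h'
      · exfalso
        have hk2 := hph k (by rw [hak]; exact huk) (by rw [hbk]; exact huk)
        rw [hak, hbk, h'] at hk2
        exact sgn_ne_zero (u k) (by linarith)
    have hal : a l = u l + t * v l := by simp [ha, PiLp.add_apply, PiLp.smul_apply]
    have hbl : b l = u l - t * v l := by simp [hb, PiLp.sub_apply, PiLp.smul_apply]
    have hprod : a l * b l < 0 := by
      rw [hal, hbl]
      have h1 : (u l + t * v l) * (u l - t * v l) = u l ^ 2 - (t * v l) ^ 2 := by ring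
      rw [h1]
      have := sq_lt_sq' (neg_lt_of_abs_lt htvl) (lt_of_abs_lt htvl)
      nlinarith [abs_nonneg (u l), abs_nonneg (t * v l), sq_abs (u l), sq_abs (t * v l)]
    have hane : a l ≠ 0 := fun h' => by rw [h'] at hprod; simp at hprod
    have hbne : b l ≠ 0 := fun h' => by rw [h'] at hprod; simp at hprod
    have h1 := hph l hane hbne
    rw [hθ1, one_mul] at h1
    have h2 := sgn_of_mul_neg hprod
    rw [h1] at h2
    exact sgn_ne_zero (b l) (by linarith)
end

section
/- Let n ≥ 2. Any spanning family {x_i}_{i=1}^{2n-2} for ℝ^n that contains one or more of the canonical basis vectors e_1,…,e_n cannot do weak phase retrieval in ℝ^n. -/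
open scoped RealInnerProductSpace BigOperators

lemma sgn_one_or_neg_one (t : ℝ) : sgn t = 1 ∨ sgn t = -1 := by
  unfold sgn; split <;> simp

lemma sgn_add_of_abs_lt {p q : ℝ} (h : |p| < |q|) :
    q + p ≠ 0 ∧ sgn (q + p) = sgn q := by
  obtain ⟨h1, h2⟩ := abs_lt.1 h
  rcases lt_trichotomy q 0 with hq | hq | hq
  · rw [abs_of_neg hq] at h2
    have hqp : q + p < 0 := by linarith
    refine ⟨ne_of_lt hqp, ?_⟩
    unfold sgn
    rw [if_neg (not_lt.2 hqp.le), if_neg (not_lt.2 hq.le)]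
  · exfalso; rw [hq, abs_zero] at h; exact absurd h (not_lt.2 (abs_nonneg p))
  · rw [abs_of_pos hq] at h1
    have hqp : 0 < q + p := by linarith
    refine ⟨(ne_of_lt hqp).symm, ?_⟩
    unfold sgn
    rw [if_pos hqp, if_pos hq]

/-- For `n ≥ 2`, a spanning family of `2n - 2` vectors in `ℝ^n` containing a canonical
basis vector cannot do weak phase retrieval. -/
theorem no_weakPhaseRetrieval_of_mem_basis {n : ℕ} (hn : 2 ≤ n)
    (x : Fin (2 * n - 2) → EuclideanSpace ℝ (Fin n))
    (hspan : Submodule.span ℝ (Set.range x) = ⊤)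
    (hbasis : ∃ (i : Fin (2 * n - 2)) (k : Fin n),
      x i = EuclideanSpace.single k (1 : ℝ)) :
    ¬ DoesWeakPhaseRetrieval x := by
  classical
  obtain ⟨m, k, hm⟩ := hbasis
  set e : EuclideanSpace ℝ (Fin n) := EuclideanSpace.single k (1 : ℝ) with he_def
  have hek : e ≠ 0 := by
    have h1 : e k = 1 := by simp [he_def, EuclideanSpace.single_apply]
    intro h
    rw [h] at h1
    simp at h1
  -- extend {e} to a basis B ⊆ range x
  have hsing : LinearIndependent ℝ ((↑) : ({e} : Set (EuclideanSpace ℝ (Fin n))) → EuclideanSpace ℝ (Fin n)) :=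
    LinearIndepOn.singleton (R := ℝ) (v := id) hek
  have hsub : ({e} : Set (EuclideanSpace ℝ (Fin n))) ⊆ Set.range x := by
    rw [Set.singleton_subset_iff]; exact ⟨m, hm⟩
  obtain ⟨B, hBx, heB', hxB, hli⟩ : ∃ b ⊆ Set.range x, {e} ⊆ b ∧ Set.range x ⊆ Submodule.span ℝ b ∧
      LinearIndependent ℝ ((↑) : b → EuclideanSpace ℝ (Fin n)) := exists_linearIndepOn_id_extension hsing hsub
  have heB : e ∈ B := heB' rfl
  have hspanB : Submodule.span ℝ B = ⊤ := by
    apply top_unique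
    rw [← hspan]
    exact Submodule.span_le.2 hxB
  have hBfin : B.Finite := hli.setFinite
  haveI : Fintype B := hBfin.fintype
  have hBbasis : Module.finrank ℝ (EuclideanSpace ℝ (Fin n)) = Fintype.card B := by
    have hb : Module.Basis B ℝ (EuclideanSpace ℝ (Fin n)) := Module.Basis.mk hli (by rw [Subtype.range_coe]; exact hspanB.ge)
    exact Module.finrank_eq_card_basis hb
  have hfr : Module.finrank ℝ (EuclideanSpace ℝ (Fin n)) = n := finrank_euclideanSpace_fin
  -- the finset of basis vectors
  set bf : Finset (EuclideanSpace ℝ (Fin n)) := hBfin.toFinset with hbf_def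
  have hbf_card : bf.card = n := by
    rw [hbf_def, Set.Finite.card_toFinset, ← hBbasis, hfr]
  have he_bf : e ∈ bf := by rw [hbf_def, Set.Finite.mem_toFinset]; exact heB
  -- choice function for indices
  have hinh : (2 * n - 2) ≠ 0 := by omega
  haveI : NeZero (2 * n - 2) := ⟨hinh⟩
  set g : EuclideanSpace ℝ (Fin n) → Fin (2 * n - 2) := fun v =>
    if h : ∃ i, x i = v then h.choose else 0 with hg_def
  have hg : ∀ v ∈ Set.range x, x (g v) = v := by
    intro v hv
    obtain ⟨i, hi⟩ := hv
    have h : ∃ i, x i = v := ⟨i, hi⟩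
    simp only [hg_def, dif_pos h]
    exact h.choose_spec
  set S₁ : Finset (Fin (2 * n - 2)) := (bf.erase e).image g with hS₁_def
  have hS₁mem : ∀ i ∈ S₁, x i ∈ B ∧ x i ≠ e := by
    intro i hi
    rw [hS₁_def, Finset.mem_image] at hi
    obtain ⟨v, hv, hgv⟩ := hi
    rw [Finset.mem_erase, hbf_def, Set.Finite.mem_toFinset] at hv
    have hxv : x (g v) = v := hg v (hBx hv.2)
    rw [← hgv, hxv]
    exact ⟨hv.2, hv.1⟩
  have hS₁card : S₁.card = n - 1 := by
    rw [hS₁_def, Finset.card_image_of_injOn, Finset.card_erase_of_mem he_bf, hbf_card]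
    intro v hv w hw hvw
    rw [Finset.coe_erase, Set.mem_diff, Set.Finite.coe_toFinset] at hv hw
    have h1 : x (g v) = v := hg v (hBx hv.1)
    have h2 : x (g w) = w := hg w (hBx hw.1)
    rw [← h1, ← h2, hvw]
  have hmS₁ : m ∉ S₁ := by
    intro hmem
    exact (hS₁mem m hmem).2 hm
  -- e is not in the span of x '' S₁
  have hespan : e ∉ Submodule.span ℝ (x '' (S₁ : Set (Fin (2 * n - 2)))) := by
    intro hcon
    have himg : x '' (S₁ : Set (Fin (2 * n - 2))) ⊆ B \ {e} := by
      rintro _ ⟨i, hi, rfl⟩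
      obtain ⟨h1, h2⟩ := hS₁mem i hi
      exact ⟨h1, h2⟩
    have hmono := Submodule.span_mono himg hcon
    have hnot : e ∉ Submodule.span ℝ (B \ {e}) := by
      have hkey := hli.notMem_span_image (s := {y : B | (y : EuclideanSpace ℝ (Fin n)) ≠ e})
        (x := (⟨e, heB⟩ : B)) (by simp)
      have himg2 : ((↑) : B → EuclideanSpace ℝ (Fin n)) '' {y : B | (y : EuclideanSpace ℝ (Fin n)) ≠ e} = B \ {e} := by
        ext y
        constructor
        · rintro ⟨⟨z, hz⟩, hz2, rfl⟩; exact ⟨hz, hz2⟩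
        · rintro ⟨hy, hy2⟩; exact ⟨⟨y, hy⟩, hy2, rfl⟩
      rwa [himg2] at hkey
    exact hnot hmono
  -- construct a ⊥ span (x '' S₁) with a k ≠ 0
  set W : Submodule ℝ (EuclideanSpace ℝ (Fin n)) := Submodule.span ℝ (x '' (S₁ : Set (Fin (2 * n - 2)))) with hW_def
  set a : EuclideanSpace ℝ (Fin n) := e - (W.orthogonalProjection e : EuclideanSpace ℝ (Fin n)) with ha_def
  have ha_mem : a ∈ Wᗮ := Submodule.sub_starProjection_mem_orthogonal (K := W) e
  have ha_ne : a ≠ 0 := by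
    intro h
    apply hespan
    have : e = (W.orthogonalProjection e : EuclideanSpace ℝ (Fin n)) := by
      have := sub_eq_zero.1 (ha_def ▸ h)
      exact this
    rw [this]; exact SetLike.coe_mem _
  have ha_orth : ∀ i ∈ S₁, ⟪a, x i⟫ = 0 := by
    intro i hi
    have hxW : x i ∈ W := Submodule.subset_span ⟨i, hi, rfl⟩
    rw [real_inner_comm]
    exact ha_mem (x i) hxW
  have hak : a k ≠ 0 := by
    have h1 : ⟪a, e⟫ = a k := by
      rw [he_def]
      rw [EuclideanSpace.inner_single_right]
      simp
    have h2 : ⟪a, e⟫ = ‖a‖ ^ 2 := by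
      have : e = a + (W.orthogonalProjection e : EuclideanSpace ℝ (Fin n)) := by
        rw [ha_def]; abel
      rw [this, inner_add_right, real_inner_self_eq_norm_sq]
      have : ⟪a, (W.orthogonalProjection e : EuclideanSpace ℝ (Fin n))⟫ = 0 := by
        rw [real_inner_comm]
        exact ha_mem _ (SetLike.coe_mem _)
      rw [this, add_zero]
    rw [← h1, h2]
    exact pow_ne_zero 2 (norm_ne_zero_iff.2 ha_ne)
  -- construct b ⊥ everything else
  set S₂ : Finset (Fin (2 * n - 2)) := (Finset.univ.erase m) \ S₁ with hS₂_def
  have hS₂card : S₂.card = n - 2 := by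
    have hsub1 : S₁ ⊆ Finset.univ.erase m := by
      intro i hi
      rw [Finset.mem_erase]
      refine ⟨?_, Finset.mem_univ _⟩
      rintro rfl; exact hmS₁ hi
    rw [hS₂_def, Finset.card_sdiff_of_subset hsub1, Finset.card_erase_of_mem (Finset.mem_univ m),
      Finset.card_univ, Fintype.card_fin, hS₁card]
    omega
  set F : Finset (EuclideanSpace ℝ (Fin n)) := insert e (S₂.image x) with hF_def
  set V : Submodule ℝ (EuclideanSpace ℝ (Fin n)) := Submodule.span ℝ (F : Set (EuclideanSpace ℝ (Fin n))) with hV_def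
  have hVne : V ≠ ⊤ := by
    intro hcon
    have h1 : Module.finrank ℝ V ≤ F.card := finrank_span_finset_le_card F
    have h2 : F.card ≤ n - 1 := by
      calc F.card ≤ (S₂.image x).card + 1 := Finset.card_insert_le _ _
        _ ≤ S₂.card + 1 := by
            have := Finset.card_image_le (f := x) (s := S₂); omega
        _ ≤ n - 1 := by omega
    rw [hcon] at h1
    rw [finrank_top, hfr] at h1
    omega
  have hVorth : Vᗮ ≠ ⊥ := by
    intro hcon
    exact hVne (Submodule.orthogonal_eq_bot_iff.1 hcon)
  obtain ⟨w, hwV, hw0⟩ := Submodule.exists_mem_ne_zero_of_ne_bot hVorth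
  have hwe : ⟪w, e⟫ = 0 := by
    rw [real_inner_comm]
    exact hwV e (Submodule.subset_span (by rw [hF_def]; exact Finset.mem_insert_self _ _))
  have hwk : w k = 0 := by
    have h1 : ⟪w, e⟫ = w k := by
      rw [he_def, EuclideanSpace.inner_single_right]; simp
    rw [← h1, hwe]
  have hwS₂ : ∀ i ∈ S₂, ⟪w, x i⟫ = 0 := by
    intro i hi
    rw [real_inner_comm]
    exact hwV (x i) (Submodule.subset_span
      (by rw [hF_def]; exact Finset.mem_insert_of_mem (Finset.mem_image_of_mem x hi)))
  -- the scaling factor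
  set L : ℝ := 1 + ∑ j : Fin n, |a j| / |w j| with hL_def
  have hL_pos : 0 < L := by
    rw [hL_def]
    have : (0 : ℝ) ≤ ∑ j : Fin n, |a j| / |w j| :=
      Finset.sum_nonneg fun j _ => div_nonneg (abs_nonneg _) (abs_nonneg _)
    linarith
  have hLj : ∀ j : Fin n, w j ≠ 0 → |a j| < |L * w j| := by
    intro j hj
    have hwj : 0 < |w j| := abs_pos.2 hj
    have h1 : |a j| / |w j| ≤ ∑ j : Fin n, |a j| / |w j| :=
      Finset.single_le_sum (f := fun t => |a t| / |w t|)
        (fun t _ => div_nonneg (abs_nonneg _) (abs_nonneg _)) (Finset.mem_univ j)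
    have h2 : |a j| / |w j| < L := by rw [hL_def]; linarith
    rw [abs_mul, abs_of_pos hL_pos]
    calc |a j| = |a j| / |w j| * |w j| := by field_simp
      _ < L * |w j| := by exact mul_lt_mul_of_pos_right h2 hwj
  -- the two vectors
  set u : EuclideanSpace ℝ (Fin n) := a + L • w with hu_def
  set v : EuclideanSpace ℝ (Fin n) := a - L • w with hv_def
  intro hwpr
  have hmeas : ∀ i, |(⟪u, x i⟫)| = |(⟪v, x i⟫)| := by
    intro i
    have hu_i : ⟪u, x i⟫ = ⟪a, x i⟫ + L * ⟪w, x i⟫ := by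
      rw [hu_def, inner_add_left, real_inner_smul_left]
    have hv_i : ⟪v, x i⟫ = ⟪a, x i⟫ - L * ⟪w, x i⟫ := by
      rw [hv_def, inner_sub_left, real_inner_smul_left]
    by_cases him : i = m
    · subst him
      have : ⟪w, x i⟫ = 0 := by rw [hm]; exact hwe
      rw [hu_i, hv_i, this]; ring_nf
    · by_cases hiS₁ : i ∈ S₁
      · have : ⟪a, x i⟫ = 0 := ha_orth i hiS₁
        rw [hu_i, hv_i, this, zero_add, zero_sub, abs_neg]
      · have hiS₂ : i ∈ S₂ := by
          rw [hS₂_def, Finset.mem_sdiff, Finset.mem_erase]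
          exact ⟨⟨him, Finset.mem_univ _⟩, hiS₁⟩
        have : ⟪w, x i⟫ = 0 := hwS₂ i hiS₂
        rw [hu_i, hv_i, this]; ring_nf
  obtain ⟨θ, hθ, hph⟩ := hwpr u v hmeas
  -- coordinate computations
  have hu_app : ∀ j, u j = a j + L * w j := by
    intro j; rw [hu_def]; simp [PiLp.add_apply, PiLp.smul_apply, smul_eq_mul]
  have hv_app : ∀ j, v j = a j - L * w j := by
    intro j; rw [hv_def]; simp [PiLp.sub_apply, PiLp.smul_apply, smul_eq_mul]
  -- at coordinate k: θ = 1
  have huk : u k = a k := by rw [hu_app, hwk]; ring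
  have hvk : v k = a k := by rw [hv_app, hwk]; ring
  have hθ1 : θ = 1 := by
    by_contra hne
    have h' : θ = -1 := hθ.resolve_left hne
    have hs := hph k (by rw [huk]; exact hak) (by rw [hvk]; exact hak)
    rw [huk, hvk, h'] at hs
    rcases sgn_one_or_neg_one (a k) with h | h <;> rw [h] at hs <;> norm_num at hs
  -- at a coordinate where w is nonzero: θ = -1, contradiction
  have hwj : ∃ j, w j ≠ 0 := by
    by_contra hcon
    push_neg at hcon
    apply hw0
    ext j
    exact hcon j
  obtain ⟨j, hj⟩ := hwj
  have habs : |a j| < |L * w j| := hLj j hj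
  have hq0 : L * w j ≠ 0 := by
    intro h; rw [h, abs_zero] at habs; exact absurd habs (not_lt.2 (abs_nonneg _))
  obtain ⟨hune, husgn⟩ := sgn_add_of_abs_lt habs
  have habs' : |a j| < |-(L * w j)| := by rwa [abs_neg]
  obtain ⟨hvne, hvsgn⟩ := sgn_add_of_abs_lt habs'
  have hune' : u j ≠ 0 := by rw [hu_app]; rw [add_comm] at hune; exact hune
  have hvne' : v j ≠ 0 := by
    rw [hv_app]
    intro h; apply hvne; rw [← h]; ring
  have hfin := hph j hune' hvne'
  rw [hθ1, one_mul] at hfin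
  have h1 : sgn (u j) = sgn (L * w j) := by
    rw [hu_app, add_comm]; exact husgn
  have h2 : sgn (v j) = sgn (-(L * w j)) := by
    have : v j = -(L * w j) + a j := by rw [hv_app]; ring
    rw [this]; exact hvsgn
  have h3 : sgn (-(L * w j)) = - sgn (L * w j) := by
    unfold sgn
    rcases lt_trichotomy (L * w j) 0 with h | h | h
    · rw [if_pos (by linarith), if_neg (not_lt.2 h.le)]; ring
    · exact absurd h hq0
    · rw [if_neg (by intro hc; linarith), if_pos h]
  rw [h1, h2, h3] at hfin
  rcases sgn_one_or_neg_one (L * w j) with h | h <;> rw [h] at hfin <;> norm_num at hfin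
end

section
/- Let X and Y be hyperplanes (subspaces of dimension n-1) in ℝ^n, and let x, y be unit vectors with x ⊥ X and y ⊥ Y. Suppose ε > 0 and for every unit vector u ∈ X there exists a unit vector v ∈ Y with ‖u - v‖ < ε (i.e., d(X,Y) < ε where d(X,Y) = sup_{u ∈ S_X} inf_{v ∈ S_Y} ‖u - v‖). Then min{‖x - y‖, ‖x + y‖} < 6ε. -/
open scoped RealInnerProductSpace BigOperators

set_option maxHeartbeats 800000 in
/-- If `X, Y` are hyperplanes in `ℝ^n`, `x ⊥ X` and `y ⊥ Y` are unit vectors, and every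
unit vector of `X` is within `ε` of a unit vector of `Y`, then
`min ‖x - y‖ ‖x + y‖ < 6ε`. -/
theorem min_dist_lt_of_hyperplanes_close {n : ℕ}
    (X Y : Submodule ℝ (EuclideanSpace ℝ (Fin n)))
    (hX : Module.finrank ℝ X = n - 1) (hY : Module.finrank ℝ Y = n - 1)
    (x y : EuclideanSpace ℝ (Fin n)) (hx : ‖x‖ = 1) (hy : ‖y‖ = 1)
    (hxX : x ∈ Xᗮ) (hyY : y ∈ Yᗮ)
    (ε : ℝ) (hε : 0 < ε)
    (hd : ∀ u ∈ X, ‖u‖ = 1 → ∃ v ∈ Y, ‖v‖ = 1 ∧ ‖u - v‖ < ε) :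
    min ‖x - y‖ ‖x + y‖ < 6 * ε := by
  rcases Nat.eq_zero_or_pos n with hn | hn
  · subst hn
    have hx0 : x = 0 := Subsingleton.elim x 0
    rw [hx0, norm_zero] at hx
    norm_num at hx
  set c : ℝ := ⟪x, y⟫ with hc
  have hc1 : |c| ≤ 1 := by
    have h := abs_real_inner_le_norm x y
    rw [hx, hy] at h; simpa using h
  set w : EuclideanSpace ℝ (Fin n) := y - c • x with hw
  have hxx : ⟪x, x⟫ = 1 := by
    rw [real_inner_self_eq_norm_sq, hx]; norm_num
  have hxw : ⟪x, w⟫ = 0 := by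
    rw [hw, inner_sub_right, real_inner_smul_right, hxx, ← hc]; ring
  have hyw : ⟪y, w⟫ = 1 - c ^ 2 := by
    rw [hw, inner_sub_right, real_inner_smul_right, real_inner_self_eq_norm_sq, hy,
      real_inner_comm, ← hc]; ring
  have hwsq : ‖w‖ ^ 2 = 1 - c ^ 2 := by
    have h0 : ⟪x, y - c • x⟫ = 0 := hxw
    have h1 : ⟪y, y - c • x⟫ = 1 - c ^ 2 := hyw
    rw [← real_inner_self_eq_norm_sq, hw, inner_sub_left, real_inner_smul_left, h0, h1]
    ring
  have hfr : Module.finrank ℝ Xᗮ = 1 := by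
    have h := Submodule.finrank_add_finrank_orthogonal (K := X)
    rw [hX, finrank_euclideanSpace_fin] at h
    omega
  have hxne : x ≠ 0 := by
    intro h; rw [h, norm_zero] at hx; norm_num at hx
  have hspan : Submodule.span ℝ {x} = Xᗮ := by
    apply Submodule.eq_of_le_of_finrank_eq
    · rw [Submodule.span_le]; simpa using hxX
    · rw [hfr, finrank_span_singleton hxne]
  have hwX : w ∈ X := by
    have hmem : w ∈ Xᗮᗮ := by
      rw [Submodule.mem_orthogonal]
      intro z hz
      rw [← hspan, Submodule.mem_span_singleton] at hz
      obtain ⟨a, rfl⟩ := hz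
      rw [real_inner_smul_left, hxw, mul_zero]
    rwa [Submodule.orthogonal_orthogonal] at hmem
  by_cases hw0 : w = 0
  · have hyc : y = c • x := by
      have := hw0
      rw [hw, sub_eq_zero] at this
      exact this
    have habs : |c| = 1 := by
      have h := congrArg norm hyc
      rw [hy, norm_smul, hx, mul_one] at h
      exact h.symm
    rcases (abs_eq (by norm_num : (0:ℝ) ≤ 1)).mp habs with h1 | h1
    · have : x - y = 0 := by rw [hyc, h1, one_smul, sub_self]
      have hmin : min ‖x - y‖ ‖x + y‖ ≤ 0 := le_trans (min_le_left _ _) (by rw [this, norm_zero])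
      linarith
    · have : x + y = 0 := by rw [hyc, h1]; simp
      have hmin : min ‖x - y‖ ‖x + y‖ ≤ 0 := le_trans (min_le_right _ _) (by rw [this, norm_zero])
      linarith
  · have hwpos : 0 < ‖w‖ := norm_pos_iff.mpr hw0
    set u : EuclideanSpace ℝ (Fin n) := ‖w‖⁻¹ • w with hu
    have huX : u ∈ X := X.smul_mem _ hwX
    have hu1 : ‖u‖ = 1 := by
      rw [hu, norm_smul, norm_inv, norm_norm, inv_mul_cancel₀ (ne_of_gt hwpos)]
    obtain ⟨v, hvY, hv1, huv⟩ := hd u huX hu1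
    have hyv : ⟪y, v⟫ = 0 := by
      rw [real_inner_comm]; exact hyY v hvY
    have hyu : ⟪y, u⟫ = ‖w‖ := by
      rw [hu, real_inner_smul_right, hyw, ← hwsq, sq]
      field_simp
    have hlt : ‖w‖ < ε := by
      have h1 : |⟪y, u - v⟫| ≤ ‖y‖ * ‖u - v‖ := abs_real_inner_le_norm y (u - v)
      rw [inner_sub_right, hyv, sub_zero, hyu, hy, one_mul, abs_of_pos hwpos] at h1
      linarith
    have hcsq : 1 - c ^ 2 < ε ^ 2 := by
      have : ‖w‖ ^ 2 < ε ^ 2 := by nlinarith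
      linarith [hwsq ▸ this]
    have hdsq : ‖x - y‖ ^ 2 = 2 - 2 * c := by
      rw [norm_sub_sq_real, hx, hy, ← hc]; ring
    have hssq : ‖x + y‖ ^ 2 = 2 + 2 * c := by
      rw [norm_add_sq_real, hx, hy, ← hc]; ring
    have hcle : c ≤ 1 := (abs_le.mp hc1).2
    have hcge : -1 ≤ c := (abs_le.mp hc1).1
    rcases le_total 0 c with h | h
    · have key : 2 - 2 * c < (6 * ε) ^ 2 := by
        nlinarith [mul_nonneg h (sub_nonneg.mpr hcle), sq_nonneg ε]
      have h3 : ‖x - y‖ < 6 * ε := by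
        by_contra hcon
        push_neg at hcon
        have hsq : (6 * ε) ^ 2 ≤ ‖x - y‖ ^ 2 := pow_le_pow_left₀ (by positivity) hcon 2
        rw [hdsq] at hsq
        linarith
      exact lt_of_le_of_lt (min_le_left _ _) h3
    · have key : 2 + 2 * c < (6 * ε) ^ 2 := by
        nlinarith [mul_nonneg (neg_nonneg.mpr h) (sub_nonneg.mpr (by linarith : -c ≤ 1)), sq_nonneg ε]
      have h3 : ‖x + y‖ < 6 * ε := by
        by_contra hcon
        push_neg at hcon
        have hsq : (6 * ε) ^ 2 ≤ ‖x + y‖ ^ 2 := pow_le_pow_left₀ (by positivity) hcon 2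
        rw [hssq] at hsq
        linarith
      exact lt_of_le_of_lt (min_le_right _ _) h3
end

section
/- Let X and Y be hyperplanes in ℝ^n, let {x_i}_{i=1}^{n-1} be a unit norm basis of X, and let {y_i}_{i=1}^{n-1} be a basis of Y. Let B > 0 be such that every unit vector u = Σ_{i=1}^{n-1} a_i x_i in X satisfies sup_{1≤i≤n-1} |a_i| ≤ B. If Σ_{i=1}^{n-1} ‖x_i - y_i‖ < ε, then for every unit vector u ∈ X there exists a unit vector v ∈ Y with ‖u - v‖ ≤ 2Bε (hence d(X,Y) ≤ 2Bε). -/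
open scoped RealInnerProductSpace BigOperators

/-- If `X, Y` are hyperplanes in `ℝ^n` with bases `{x i}` (unit norm) and `{y i}`, the
coordinate functionals of the basis of `X` are bounded by `B` on unit vectors, and
`∑ ‖x i - y i‖ < ε`, then every unit vector of `X` is within `2Bε` of a unit vector
of `Y`. -/
theorem dist_hyperplanes_le_of_bases_close {n : ℕ}
    (X Y : Submodule ℝ (EuclideanSpace ℝ (Fin n)))
    (hX : Module.finrank ℝ X = n - 1) (hY : Module.finrank ℝ Y = n - 1)
    (x y : Fin (n - 1) → EuclideanSpace ℝ (Fin n))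
    (hxX : ∀ i, x i ∈ X) (hyY : ∀ i, y i ∈ Y)
    (hxli : LinearIndependent ℝ x) (hxsp : Submodule.span ℝ (Set.range x) = X)
    (hyli : LinearIndependent ℝ y) (hysp : Submodule.span ℝ (Set.range y) = Y)
    (hxnorm : ∀ i, ‖x i‖ = 1)
    (B : ℝ) (hB : 0 < B)
    (hcoef : ∀ a : Fin (n - 1) → ℝ, ‖∑ i, a i • x i‖ = 1 → ∀ i, |a i| ≤ B)
    (ε : ℝ) (hsum : ∑ i, ‖x i - y i‖ < ε) :
    ∀ u ∈ X, ‖u‖ = 1 → ∃ v ∈ Y, ‖v‖ = 1 ∧ ‖u - v‖ ≤ 2 * B * ε := by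
  intro u huX hu
  have hε : 0 < ε := lt_of_le_of_lt (Finset.sum_nonneg fun i _ => norm_nonneg _) hsum
  obtain ⟨a, ha⟩ := (Submodule.mem_span_range_iff_exists_fun ℝ).mp (hxsp ▸ huX)
  have haB : ∀ i, |a i| ≤ B := hcoef a (by rw [ha, hu])
  set w : EuclideanSpace ℝ (Fin n) := ∑ i, a i • y i with hw
  have hwY : w ∈ Y := Submodule.sum_mem _ fun i _ => Submodule.smul_mem _ _ (hyY i)
  have huw : ‖u - w‖ ≤ B * ε := by
    have heq : u - w = ∑ i, a i • (x i - y i) := by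
      rw [← ha, hw, ← Finset.sum_sub_distrib]
      simp [smul_sub]
    calc ‖u - w‖ = ‖∑ i, a i • (x i - y i)‖ := by rw [heq]
      _ ≤ ∑ i, ‖a i • (x i - y i)‖ := norm_sum_le _ _
      _ = ∑ i, |a i| * ‖x i - y i‖ := by simp [norm_smul]
      _ ≤ ∑ i, B * ‖x i - y i‖ := Finset.sum_le_sum fun i _ =>
          mul_le_mul_of_nonneg_right (haB i) (norm_nonneg _)
      _ = B * ∑ i, ‖x i - y i‖ := by rw [Finset.mul_sum]
      _ ≤ B * ε := by
          have hs : (0:ℝ) ≤ ∑ i, ‖x i - y i‖ := Finset.sum_nonneg fun i _ => norm_nonneg _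
          nlinarith
  by_cases hBe : B * ε < 1
  · have hwpos : 0 < ‖w‖ := by
      have h1 := norm_sub_norm_le u w
      rw [hu] at h1
      linarith
    have hwdiff : |‖w‖ - 1| ≤ B * ε := by
      have h2 := abs_norm_sub_norm_le w u
      rw [hu, norm_sub_rev] at h2
      linarith
    refine ⟨‖w‖⁻¹ • w, Submodule.smul_mem _ _ hwY, ?_, ?_⟩
    · rw [norm_smul, norm_inv, norm_norm, inv_mul_cancel₀ hwpos.ne']
    · have hwv : ‖w - ‖w‖⁻¹ • w‖ = |‖w‖ - 1| := by
        have : w - ‖w‖⁻¹ • w = (1 - ‖w‖⁻¹) • w := by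
          rw [sub_smul, one_smul]
        rw [this, norm_smul, Real.norm_eq_abs, ← abs_of_pos hwpos, ← abs_mul]
        congr 1
        field_simp
        rw [abs_of_pos hwpos]
        ring
      have htri : ‖u - ‖w‖⁻¹ • w‖ ≤ ‖u - w‖ + ‖w - ‖w‖⁻¹ • w‖ := by
        have : u - ‖w‖⁻¹ • w = (u - w) + (w - ‖w‖⁻¹ • w) := by abel
        rw [this]; exact norm_add_le _ _
      rw [hwv] at htri
      linarith
  · push_neg at hBe
    have hne : Nonempty (Fin (n - 1)) := by
      by_contra h
      have : Set.range x = ∅ := Set.range_eq_empty_iff.mpr (not_nonempty_iff.mp h)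
      rw [this, Submodule.span_empty] at hxsp
      rw [← hxsp] at huX
      simp only [Submodule.mem_bot] at huX
      rw [huX, norm_zero] at hu
      norm_num at hu
    obtain ⟨i0⟩ := hne
    have hy0 : y i0 ≠ 0 := hyli.ne_zero i0
    have hy0n : 0 < ‖y i0‖ := norm_pos_iff.mpr hy0
    refine ⟨‖y i0‖⁻¹ • y i0, Submodule.smul_mem _ _ (hyY i0), ?_, ?_⟩
    · rw [norm_smul, norm_inv, norm_norm, inv_mul_cancel₀ hy0n.ne']
    · have h3 : ‖u - ‖y i0‖⁻¹ • y i0‖ ≤ ‖u‖ + ‖‖y i0‖⁻¹ • y i0‖ := norm_sub_le _ _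
      rw [hu, norm_smul, norm_inv, norm_norm, inv_mul_cancel₀ hy0n.ne'] at h3
      linarith
end

section
/- Let {x_i}_{i=1}^{2n-2} be unit vectors in ℝ^n. The following are equivalent: (1) whenever I ⊆ {1,…,2n-2} and x, y ∈ ℝ^n are nonzero vectors with x ⊥ x_i for all i ∈ I and y ⊥ x_i for all i ∈ I^c, there is no j ∈ {1,…,n} with ⟨x, e_j⟩ = 0 = ⟨y, e_j⟩; (2) for every J ⊆ {1,…,n} with |J| = n-1, the family {P_J x_i}_{i=1}^{2n-2} does phase retrieval in span{e_j}_{j∈J}; (3) for every nonempty J ⊆ {1,…,n} with |J| < n, the family {P_J x_i}_{i=1}^{2n-2} does phase retrieval in span{e_j}_{j∈J}. -/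
open scoped RealInnerProductSpace BigOperators

/-- The orthogonal projection of `ℝ^n` onto the span of the canonical basis vectors
indexed by `J`, described coordinatewise. -/
def projJ {n : ℕ} (J : Finset (Fin n)) (u : EuclideanSpace ℝ (Fin n)) :
    EuclideanSpace ℝ (Fin n) := WithLp.toLp 2 (fun j => if j ∈ J then u j else 0)

/-- The span of the canonical basis vectors indexed by `J`. -/
def coordSpan {n : ℕ} (J : Finset (Fin n)) : Submodule ℝ (EuclideanSpace ℝ (Fin n)) :=
  Submodule.span ℝ ((fun j => EuclideanSpace.single j (1 : ℝ)) '' (J : Set (Fin n)))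

/-- A family of vectors does phase retrieval in a subspace `W` of `ℝ^n`. -/
def DoesPhaseRetrievalIn {n : ℕ} {ι : Type*}
    (W : Submodule ℝ (EuclideanSpace ℝ (Fin n)))
    (v : ι → EuclideanSpace ℝ (Fin n)) : Prop :=
  ∀ u w : EuclideanSpace ℝ (Fin n), u ∈ W → w ∈ W →
    (∀ i, |(⟪u, v i⟫)| = |(⟪w, v i⟫)|) → u = w ∨ u = -w


lemma inner_eq_sum {n : ℕ} (u v : EuclideanSpace ℝ (Fin n)) :
    ⟪u, v⟫ = ∑ i, u i * v i := by
  simp [PiLp.inner_apply, RCLike.inner_apply, conj_trivial]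
  exact Finset.sum_congr rfl fun i _ => mul_comm _ _

lemma inner_single' {n : ℕ} (u : EuclideanSpace ℝ (Fin n)) (j : Fin n) :
    ⟪u, EuclideanSpace.single j (1:ℝ)⟫ = u j := by
  rw [inner_eq_sum]
  simp [EuclideanSpace.single_apply]

def coordSub {n : ℕ} (J : Finset (Fin n)) : Submodule ℝ (EuclideanSpace ℝ (Fin n)) where
  carrier := {u | ∀ j ∉ J, u j = 0}
  add_mem' := by intro a b ha hb j hj; show a j + b j = 0; rw [ha j hj, hb j hj, add_zero]
  zero_mem' := fun j _ => rfl
  smul_mem' := by intro c a ha j hj; show c * a j = 0; rw [ha j hj, mul_zero]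

lemma mem_coordSpan_iff {n : ℕ} (J : Finset (Fin n)) (u : EuclideanSpace ℝ (Fin n)) :
    u ∈ coordSpan J ↔ ∀ j ∉ J, u j = 0 := by
  constructor
  · intro hu
    have hle : coordSpan J ≤ coordSub J := by
      rw [coordSpan, Submodule.span_le]
      rintro _ ⟨j, hj, rfl⟩ k hk
      have hjk : k ≠ j := fun h => hk (h ▸ hj)
      show EuclideanSpace.single j (1:ℝ) k = 0
      simp [EuclideanSpace.single_apply, hjk]
    exact hle hu
  · intro hu
    have : u = ∑ j ∈ J, u j • EuclideanSpace.single j (1:ℝ) := by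
      ext k
      rw [WithLp.ofLp_sum, Finset.sum_apply k J]
      simp only [PiLp.smul_apply, EuclideanSpace.single_apply,
        smul_eq_mul, mul_ite, mul_one, mul_zero]
      rw [Finset.sum_ite_eq J k u]
      by_cases hk : k ∈ J
      · simp [hk]
      · simp [hk, hu k hk]
    rw [this]
    exact Submodule.sum_mem _ fun j hj => Submodule.smul_mem _ _
      (Submodule.subset_span ⟨j, hj, rfl⟩)

lemma inner_projJ {n : ℕ} (J : Finset (Fin n)) {u : EuclideanSpace ℝ (Fin n)}
    (hu : u ∈ coordSpan J) (y : EuclideanSpace ℝ (Fin n)) :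
    ⟪u, projJ J y⟫ = ⟪u, y⟫ := by
  rw [inner_eq_sum, inner_eq_sum]
  refine Finset.sum_congr rfl fun j _ => ?_
  by_cases hj : j ∈ J
  · simp [projJ, hj]
  · rw [(mem_coordSpan_iff J u).1 hu j hj]; ring

/-- For unit vectors `{x i}_{i=1}^{2n-2}` in `ℝ^n` the following are equivalent:
(1) no pair of nonzero vectors, orthogonal respectively to `{x i}_{i ∈ I}` and
`{x i}_{i ∈ Iᶜ}`, can both vanish at some coordinate `j`;
(2) every projection onto `n - 1` coordinates does phase retrieval there;
(3) every projection onto a nonempty proper subset of coordinates does phase retrieval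
there. -/
theorem weakPhaseRetrieval_projection_equivalences {n : ℕ}
    (x : Fin (2 * n - 2) → EuclideanSpace ℝ (Fin n)) (hx : ∀ i, ‖x i‖ = 1) :
    ((∀ I : Set (Fin (2 * n - 2)), ∀ u v : EuclideanSpace ℝ (Fin n),
        u ≠ 0 → v ≠ 0 → (∀ i ∈ I, ⟪u, x i⟫ = 0) → (∀ i ∉ I, ⟪v, x i⟫ = 0) →
        ¬ ∃ j : Fin n, ⟪u, EuclideanSpace.single j (1 : ℝ)⟫ = 0 ∧
            ⟪v, EuclideanSpace.single j (1 : ℝ)⟫ = 0) ↔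
      (∀ J : Finset (Fin n), J.card = n - 1 →
        DoesPhaseRetrievalIn (coordSpan J) (fun i => projJ J (x i)))) ∧
    ((∀ J : Finset (Fin n), J.card = n - 1 →
        DoesPhaseRetrievalIn (coordSpan J) (fun i => projJ J (x i))) ↔
      (∀ J : Finset (Fin n), J.Nonempty → J.card < n →
        DoesPhaseRetrievalIn (coordSpan J) (fun i => projJ J (x i)))) := by
  clear hx
  constructor
  · constructor
    · -- (1) → (2)
      intro h1 J hJ u w hu hw hinner
      by_contra hcon
      push_neg at hcon
      obtain ⟨huw, huw'⟩ := hcon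
      rcases Nat.eq_zero_or_pos n with hn | hn
      · exact huw (by subst hn; ext k; exact k.elim0)
      have hamem : u - w ∈ coordSpan J := Submodule.sub_mem _ hu hw
      have hbmem : u + w ∈ coordSpan J := Submodule.add_mem _ hu hw
      have ha0 : u - w ≠ 0 := sub_ne_zero.2 huw
      have hb0 : u + w ≠ 0 := fun h => huw' (eq_neg_iff_add_eq_zero.2 h)
      have hmul : ∀ i, ⟪u - w, x i⟫ = 0 ∨ ⟪u + w, x i⟫ = 0 := by
        intro i
        have h := hinner i
        rw [inner_projJ J hu, inner_projJ J hw] at h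
        rcases abs_eq_abs.1 h with h | h
        · left; rw [inner_sub_left, h, sub_self]
        · right; rw [inner_add_left, h]; ring
      have hjex : ∃ j : Fin n, j ∉ J := by
        by_contra hc
        push_neg at hc
        rw [Finset.eq_univ_iff_forall.2 hc, Finset.card_univ, Fintype.card_fin] at hJ
        omega
      obtain ⟨j, hj⟩ := hjex
      refine h1 {i | ⟪u - w, x i⟫ = 0} (u - w) (u + w) ha0 hb0 (fun i hi => hi)
        (fun i hi => (hmul i).resolve_left hi) ⟨j, ?_, ?_⟩
      · rw [inner_single']; exact (mem_coordSpan_iff J _).1 hamem j hj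
      · rw [inner_single']; exact (mem_coordSpan_iff J _).1 hbmem j hj
    · -- (2) → (1)
      intro h2 I u v hu hv hI hIc hex
      obtain ⟨j, hju, hjv⟩ := hex
      rw [inner_single'] at hju hjv
      have hJcard : (Finset.univ.erase j).card = n - 1 := by
        rw [Finset.card_erase_of_mem (Finset.mem_univ j), Finset.card_univ, Fintype.card_fin]
      have hmem : ∀ z : EuclideanSpace ℝ (Fin n), z j = 0 →
          z ∈ coordSpan (Finset.univ.erase j) := by
        intro z hz
        rw [mem_coordSpan_iff]
        intro k hk
        have hkj : k = j := by
          by_contra hkj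
          exact hk (Finset.mem_erase.2 ⟨hkj, Finset.mem_univ k⟩)
        rw [hkj]; exact hz
      have hpu : u + v ∈ coordSpan (Finset.univ.erase j) :=
        hmem _ (by show u j + v j = 0; rw [hju, hjv, add_zero])
      have hqu : u - v ∈ coordSpan (Finset.univ.erase j) :=
        hmem _ (by show u j - v j = 0; rw [hju, hjv, sub_zero])
      have habs : ∀ i, |⟪u + v, projJ (Finset.univ.erase j) (x i)⟫| =
          |⟪u - v, projJ (Finset.univ.erase j) (x i)⟫| := by
        intro i
        rw [inner_projJ _ hpu, inner_projJ _ hqu, inner_add_left, inner_sub_left]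
        by_cases hi : i ∈ I
        · rw [hI i hi, zero_add, zero_sub, abs_neg]
        · rw [hIc i hi, add_zero, sub_zero]
      rcases h2 _ hJcard (u + v) (u - v) hpu hqu habs with h | h
      · apply hv
        have h2v : (2:ℝ) • v = 0 := by
          have hc : (2:ℝ) • v = (u + v) - (u - v) := by module
          rw [hc, h, sub_self]
        exact (smul_eq_zero.1 h2v).resolve_left (by norm_num)
      · apply hu
        have h2u : (2:ℝ) • u = 0 := by
          have hc : (2:ℝ) • u = (u + v) + (u - v) := by module
          rw [hc, h]; abel
        exact (smul_eq_zero.1 h2u).resolve_left (by norm_num)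
  · constructor
    · -- (2) → (3)
      intro h2 J hJne hJlt u w hu hw hinner
      obtain ⟨J', hJJ', hJ'card⟩ := Finset.exists_superset_card_eq
        (show J.card ≤ n - 1 by omega) (by rw [Fintype.card_fin]; omega)
      have hle : coordSpan J ≤ coordSpan J' := Submodule.span_mono (Set.image_mono hJJ')
      have hinner' : ∀ i, |⟪u, projJ J' (x i)⟫| = |⟪w, projJ J' (x i)⟫| := by
        intro i
        rw [inner_projJ J' (hle hu), inner_projJ J' (hle hw),
          ← inner_projJ J hu (x i), ← inner_projJ J hw (x i)]
        exact hinner i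
      exact h2 J' hJ'card u w (hle hu) (hle hw) hinner'
    · -- (3) → (2)
      intro h3 J hJ u w hu hw hinner
      by_cases hn : 2 ≤ n
      · exact h3 J (Finset.card_pos.1 (by omega)) (by omega) u w hu hw hinner
      · have hJe : J = ∅ := Finset.card_eq_zero.1 (by omega)
        subst hJe
        left
        ext k
        rw [(mem_coordSpan_iff ∅ u).1 hu k (Finset.notMem_empty k),
          (mem_coordSpan_iff ∅ w).1 hw k (Finset.notMem_empty k)]
end

section
/- For every n ≥ 1 and every m ≥ 1, there exist vectors {x_i}_{i=1}^m in ℝ^n such that for every nonempty subset I ⊆ {1,…,n}, the projected family {P_I x_i}_{i=1}^m is full spark in X_I = span{e_j}_{j∈I}; that is, for every S ⊆ {1,…,m} with |S| = min(m, |I|), the family {P_I x_i}_{i∈S} is linearly independent. -/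
open scoped RealInnerProductSpace BigOperators

lemma key_vandermonde : ∀ (k : ℕ) (a : Fin k → ℕ), StrictMono a →
    ∀ (c : Fin k → ℝ) (r : Fin k → ℝ), StrictMono r → (∀ i, 0 < r i) →
    (∀ i, ∑ j, c j * (r i) ^ (a j) = 0) → ∀ j, c j = 0 := by
  intro k
  induction k with
  | zero => intro a _ c r _ _ _ j; exact j.elim0
  | succ k ih =>
    intro a ha c r hr hrpos hroot
    set g : ℝ → ℝ := fun t => ∑ j, c j * t ^ (a j - a 0) with hg
    have ha0 : ∀ j, a 0 ≤ a j := fun j => ha.monotone (Fin.zero_le j)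
    have hgroot : ∀ i, g (r i) = 0 := by
      intro i
      have h1 : r i ^ (a 0) * g (r i) = 0 := by
        rw [hg, Finset.mul_sum, ← hroot i]
        apply Finset.sum_congr rfl
        intro j _
        rw [← mul_assoc, mul_comm (r i ^ a 0) (c j), mul_assoc, ← pow_add]
        congr 2
        have := ha0 j; omega
      rcases mul_eq_zero.1 h1 with h | h
      · exact absurd h (pow_ne_zero _ (ne_of_gt (hrpos i)))
      · exact h
    have hgd : ∀ t : ℝ,
        HasDerivAt g (∑ j, c j * (((a j - a 0 : ℕ) : ℝ) * t ^ (a j - a 0 - 1))) t := by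
      intro t
      exact HasDerivAt.fun_sum fun j _ => (hasDerivAt_pow (a j - a 0) t).const_mul (c j)
    have hgc : Continuous g := by
      have : Differentiable ℝ g := fun t => (hgd t).differentiableAt
      exact this.continuous
    have hR : ∀ i : Fin k, ∃ s, s ∈ Set.Ioo (r i.castSucc) (r i.succ) ∧ deriv g s = 0 := by
      intro i
      have hlt : r i.castSucc < r i.succ := hr (Fin.castSucc_lt_succ (i := i))
      obtain ⟨s, hs, hds⟩ := exists_deriv_eq_zero hlt hgc.continuousOn
        ((hgroot _).trans (hgroot _).symm)
      exact ⟨s, hs, hds⟩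
    choose s hsmem hds using hR
    have hsm : StrictMono s := by
      intro i i' h
      have h1 : s i < r i.succ := (hsmem i).2
      have h2 : r i'.castSucc < s i' := (hsmem i').1
      have h3 : i.succ ≤ i'.castSucc := by
        rw [Fin.le_def]
        simp only [Fin.val_succ, Fin.coe_castSucc]
        exact h
      exact lt_of_lt_of_le h1 (le_trans (hr.monotone h3) (le_of_lt h2))
    have hspos : ∀ i, 0 < s i := fun i => lt_trans (hrpos i.castSucc) (hsmem i).1
    have hroot' : ∀ i : Fin k,
        ∑ j : Fin k, (c j.succ * ((a j.succ - a 0 : ℕ) : ℝ)) * (s i) ^ (a j.succ - a 0 - 1) = 0 := by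
      intro i
      have h0 := hds i
      rw [(hgd (s i)).deriv, Fin.sum_univ_succ] at h0
      simp only [Nat.sub_self, Nat.cast_zero, zero_mul, mul_zero, zero_add] at h0
      rw [← h0]
      apply Finset.sum_congr rfl
      intro j _
      ring
    have hsucc : ∀ j : Fin k, c j.succ = 0 := by
      have ha' : StrictMono (fun j : Fin k => a j.succ - a 0 - 1) := by
        intro j j' h
        show a j.succ - a 0 - 1 < a j'.succ - a 0 - 1
        have h1 : a j.succ < a j'.succ := ha (by simpa using h)
        have h2 : a 0 < a j.succ := ha (Fin.succ_pos j)
        omega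
      intro j
      have := ih (fun j : Fin k => a j.succ - a 0 - 1) ha'
        (fun j => c j.succ * ((a j.succ - a 0 : ℕ) : ℝ)) s hsm hspos hroot' j
      have hpos : (0 : ℝ) < ((a j.succ - a 0 : ℕ) : ℝ) := by
        have h2 : a 0 < a j.succ := ha (Fin.succ_pos j)
        exact_mod_cast Nat.sub_pos_of_lt h2
      exact (mul_eq_zero.1 this).resolve_right (ne_of_gt hpos)
    have hc0 : c 0 = 0 := by
      have h0 := hroot 0
      rw [Fin.sum_univ_succ] at h0
      simp only [hsucc, zero_mul, Finset.sum_const_zero, add_zero] at h0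
      exact (mul_eq_zero.1 h0).resolve_right (pow_ne_zero _ (ne_of_gt (hrpos 0)))
    intro j
    exact Fin.cases hc0 hsucc j

lemma vandermonde_rows_li (k : ℕ) (a : Fin k → ℕ) (ha : StrictMono a)
    (r : Fin k → ℝ) (hr : StrictMono r) (hrpos : ∀ i, 0 < r i) :
    LinearIndependent ℝ (fun i : Fin k => (fun j => r i ^ a j : Fin k → ℝ)) := by
  set M : Matrix (Fin k) (Fin k) ℝ := Matrix.of fun i j => r i ^ a j with hM
  have hcols : LinearIndependent ℝ (fun j => M.transpose j) := by
    rw [Fintype.linearIndependent_iff]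
    intro c hc
    apply key_vandermonde k a ha c r hr hrpos
    intro i
    have := congrFun hc i
    simpa [Finset.sum_apply, hM, Matrix.transpose_apply] using this
  exact Matrix.linearIndependent_rows_iff_isUnit.mpr
    (Matrix.linearIndependent_cols_iff_isUnit.mp hcols)

/-- For every `n ≥ 1` and `m ≥ 1` there are `m` vectors in `ℝ^n` all of whose coordinate
projections are full spark. -/
theorem exists_vectors_all_projections_fullSpark (n m : ℕ) (hn : 1 ≤ n) (hm : 1 ≤ m) :
    ∃ x : Fin m → EuclideanSpace ℝ (Fin n),
      ∀ I : Finset (Fin n), I.Nonempty →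
        ∀ S : Finset (Fin m), S.card = min m I.card →
          LinearIndependent ℝ (fun i : S => projJ I (x i)) := by
  refine ⟨fun i => (WithLp.toLp 2 (fun j : Fin n => ((i : ℕ) + 1 : ℝ) ^ (j : ℕ)) : EuclideanSpace ℝ (Fin n)), ?_⟩
  intro I hI S hS
  set k := min m I.card with hk
  have hkI : k ≤ I.card := min_le_right _ _
  obtain ⟨I', hI'sub, hI'card⟩ := Finset.exists_subset_card_eq hkI
  set eS := S.orderIsoOfFin hS with heS
  set eI := I'.orderIsoOfFin hI'card with heI
  set a : Fin k → ℕ := fun j => ((eI j : Fin n) : ℕ) with haa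
  set r : Fin k → ℝ := fun i => (((eS i : Fin m) : ℕ) : ℝ) + 1 with hrr
  have ha : StrictMono a := by
    intro j j' h
    have h1 : eI j < eI j' := eI.strictMono h
    exact_mod_cast h1
  have hr : StrictMono r := by
    intro i i' h
    have h1 : eS i < eS i' := eS.strictMono h
    have h2 : ((eS i : Fin m) : ℕ) < ((eS i' : Fin m) : ℕ) := h1
    simp only [hrr]
    exact_mod_cast Nat.add_lt_add_right h2 1
  have hrpos : ∀ i, 0 < r i := by
    intro i
    simp only [hrr]
    positivity
  -- the restriction linear map
  let φ : EuclideanSpace ℝ (Fin n) →ₗ[ℝ] (Fin k → ℝ) :=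
    { toFun := fun u j => u (eI j)
      map_add' := fun u v => rfl
      map_smul' := fun c u => rfl }
  apply LinearIndependent.of_comp φ
  have hrows := vandermonde_rows_li k a ha r hr hrpos
  have hEq : (φ ∘ fun i : S => projJ I
      ((fun i : Fin m => (WithLp.toLp 2 (fun j : Fin n => ((i : ℕ) + 1 : ℝ) ^ (j : ℕ)) : EuclideanSpace ℝ (Fin n))) i))
      ∘ eS.toEquiv = fun i : Fin k => (fun j => r i ^ a j : Fin k → ℝ) := by
    funext i
    funext j
    simp only [Function.comp_apply, LinearMap.coe_mk, AddHom.coe_mk]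
    have hmem : (eI j : Fin n) ∈ I := hI'sub (eI j).2
    show (if ((eI j : Fin n)) ∈ I
        then ((((eS.toEquiv i : Fin m) : ℕ) : ℝ) + 1) ^ ((eI j : Fin n) : ℕ) else 0)
      = r i ^ a j
    rw [if_pos hmem]
    rfl
  rw [← hEq] at hrows
  exact (linearIndependent_equiv eS.toEquiv).mp hrows
end
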